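/- arXiv:1901.03322 — 4 statements merged into one kernel-verified Lean document; each statement's English description precedes it below -/
import Mathlib

section
/- Let S be a finite spanning subset of a finite-dimensional real vector space V, and for x ∈ V define the robustness R(x) as the infimum of Σᵢ |qᵢ| over all finite decompositions x = Σᵢ qᵢ sᵢ with sᵢ ∈ S and Σᵢ qᵢ = 1. Then R(x) = 1 if and only if x lies in the convex hull of S, and R(x) > 1 otherwise (for any x admitting such a decomposition). -/
/-!
An affine decomposition `x = ∑ qᵢ sᵢ` has `∑ |qᵢ| ≥ ∑ qᵢ = 1`, with equality exactly when all
`qᵢ ≥ 0`, i.e. when it exhibits `x` as a convex combination of `S`. So `R(x) ≤ 1` on the convex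
hull, and the converse needs the infimum to be attained: the admissible weight vectors form a
closed affine subspace of the finite-dimensional space `S → ℝ`, on which the coercive function
`q ↦ ∑ |qᵢ|` has a minimum.
-/

/-- The robustness of `x` with respect to the finite set `S`: the infimum of `∑ |qᵢ|`
over all affine decompositions `x = ∑ qᵢ sᵢ` with `sᵢ ∈ S` and `∑ qᵢ = 1`. -/
noncomputable def rob {V : Type*} [AddCommGroup V] [Module ℝ V] (S : Finset V) (x : V) : ℝ :=
  sInf {r : ℝ | ∃ q : V → ℝ,
    (∑ s ∈ S, q s = 1) ∧ (∑ s ∈ S, q s • s = x) ∧ r = ∑ s ∈ S, |q s|}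

open Filter Finset

theorem LinearMap.isClosed_setOf_apply_eq {𝕜 E F : Type*} [NontriviallyNormedField 𝕜]
    [CompleteSpace 𝕜] [AddCommGroup E] [TopologicalSpace E] [IsTopologicalAddGroup E]
    [Module 𝕜 E] [ContinuousSMul 𝕜 E] [T2Space E] [FiniteDimensional 𝕜 E]
    [AddCommGroup F] [Module 𝕜 F] (L : E →ₗ[𝕜] F) (y : F) :
    IsClosed {p | L p = y} := by
  rcases Set.eq_empty_or_nonempty {p | L p = y} with h | ⟨p₀, hp₀⟩
  · rw [h]
    exact isClosed_empty
  · have : {p | L p = y} = (· - p₀) ⁻¹' (LinearMap.ker L : Set E) := by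
      ext p
      simp [show L p₀ = y from hp₀, sub_eq_zero]
    rw [this]
    exact (LinearMap.ker L).closed_of_finiteDimensional.preimage (continuous_sub_right p₀)

theorem tendsto_sum_abs_cocompact_atTop {ι : Type*} [Fintype ι] :
    Tendsto (fun p : ι → ℝ => ∑ i, |p i|) (cocompact _) atTop := by
  refine tendsto_atTop_mono (fun p => ?_) tendsto_norm_cocompact_atTop
  refine (pi_norm_le_iff_of_nonneg (by positivity)).2 fun i => ?_
  exact single_le_sum (f := fun i => |p i|) (fun j _ => abs_nonneg _) (mem_univ i)

theorem IsClosed.exists_isMinOn_sum_abs {ι : Type*} [Fintype ι] {C : Set (ι → ℝ)}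
    (hC : IsClosed C) (hne : C.Nonempty) :
    ∃ p ∈ C, IsMinOn (fun p => ∑ i, |p i|) C p := by
  obtain ⟨p₀, hp₀⟩ := hne
  refine (continuous_finsetSum _ fun i _ => (continuous_apply i).abs).continuousOn
    |>.exists_isMinOn' hC hp₀ ?_
  exact (tendsto_sum_abs_cocompact_atTop.eventually (eventually_ge_atTop _)).filter_mono
    inf_le_left

theorem Finset.sum_extend_val {α β M : Type*} [Zero β] [AddCommMonoid M] (S : Finset α)
    (p : S → β) (g : α → β → M) :
    ∑ s ∈ S, g s (Function.extend Subtype.val p 0 s) = ∑ s : S, g s (p s) := by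
  rw [← sum_coe_sort]
  simp only [Subtype.val_injective.extend_apply]

section Robustness

variable {V : Type*} [AddCommGroup V] [Module ℝ V] {S : Finset V} {x : V}

theorem rob_le_sum_abs {q : V → ℝ} (h1 : ∑ s ∈ S, q s = 1) (hx : ∑ s ∈ S, q s • s = x) :
    rob S x ≤ ∑ s ∈ S, |q s| := by
  refine csInf_le ⟨0, ?_⟩ ⟨q, h1, hx, rfl⟩
  rintro r ⟨q', -, -, rfl⟩
  positivity

theorem one_le_rob (hx : ∃ q : V → ℝ, (∑ s ∈ S, q s = 1) ∧ ∑ s ∈ S, q s • s = x) :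
    1 ≤ rob S x := by
  obtain ⟨q₀, h1, hq₀⟩ := hx
  refine le_csInf ⟨_, q₀, h1, hq₀, rfl⟩ ?_
  rintro r ⟨q, hq1, -, rfl⟩
  exact hq1 ▸ sum_le_sum fun s _ => le_abs_self (q s)

theorem exists_sum_abs_eq_rob (hx : ∃ q : V → ℝ, (∑ s ∈ S, q s = 1) ∧ ∑ s ∈ S, q s • s = x) :
    ∃ q : V → ℝ, (∑ s ∈ S, q s = 1) ∧ (∑ s ∈ S, q s • s = x) ∧
      ∑ s ∈ S, |q s| = rob S x := by
  obtain ⟨q₀, h1, hq₀⟩ := hx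
  let C : Set (S → ℝ) := {p | ∑ s, p s = 1} ∩ {p | ∑ s, p s • (s : V) = x}
  have hC : IsClosed C := by
    refine (isClosed_eq (by fun_prop) continuous_const).inter ?_
    simpa only [Fintype.linearCombination_apply] using
      (Fintype.linearCombination ℝ ((↑) : S → V)).isClosed_setOf_apply_eq x
  have restrict_mem : ∀ q : V → ℝ, ∑ s ∈ S, q s = 1 → ∑ s ∈ S, q s • s = x →
      (fun s : S => q s) ∈ C := fun q hq1 hqx =>
    ⟨(sum_coe_sort S q).trans hq1, (sum_coe_sort S fun s => q s • s).trans hqx⟩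
  obtain ⟨p, ⟨hp1, hpx⟩, hmin⟩ := hC.exists_isMinOn_sum_abs ⟨_, restrict_mem q₀ h1 hq₀⟩
  set q := Function.extend Subtype.val p 0
  have hq1 : ∑ s ∈ S, q s = 1 := by rwa [sum_extend_val S p fun _ a => a]
  have hqx : ∑ s ∈ S, q s • s = x := by rwa [sum_extend_val S p fun s a => a • s]
  refine ⟨q, hq1, hqx, le_antisymm ?_ (rob_le_sum_abs hq1 hqx)⟩
  rw [sum_extend_val S p fun _ a => |a|]
  refine le_csInf ⟨_, q₀, h1, hq₀, rfl⟩ ?_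
  rintro r ⟨q', hq'1, hq'x, rfl⟩
  rw [← sum_coe_sort S]
  exact hmin (restrict_mem q' hq'1 hq'x)

theorem rob_le_one_of_mem_convexHull (h : x ∈ convexHull ℝ (S : Set V)) : rob S x ≤ 1 := by
  obtain ⟨w, hw0, hw1, hwx⟩ := Finset.mem_convexHull'.1 h
  calc rob S x ≤ ∑ s ∈ S, |w s| := rob_le_sum_abs hw1 hwx
    _ = 1 := by rw [← hw1]; exact sum_congr rfl fun s hs => abs_of_nonneg (hw0 s hs)

theorem mem_convexHull_of_rob_eq_one
    (hx : ∃ q : V → ℝ, (∑ s ∈ S, q s = 1) ∧ ∑ s ∈ S, q s • s = x) (h : rob S x = 1) :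
    x ∈ convexHull ℝ (S : Set V) := by
  obtain ⟨q, hq1, hqx, hq⟩ := exists_sum_abs_eq_rob hx
  have habs : ∀ s ∈ S, q s = |q s| :=
    (sum_eq_sum_iff_of_le fun s _ => le_abs_self (q s)).1 (by rw [hq1, hq, h])
  exact Finset.mem_convexHull'.2 ⟨q, fun s hs => (habs s hs).symm ▸ abs_nonneg _, hq1, hqx⟩

theorem rob_eq_one_iff (hx : ∃ q : V → ℝ, (∑ s ∈ S, q s = 1) ∧ ∑ s ∈ S, q s • s = x) :
    rob S x = 1 ↔ x ∈ convexHull ℝ (S : Set V) :=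
  ⟨mem_convexHull_of_rob_eq_one hx,
    fun h => (rob_le_one_of_mem_convexHull h).antisymm (one_le_rob hx)⟩

end Robustness

theorem stmt_2_general {V : Type*} [AddCommGroup V] [Module ℝ V]
    (S : Finset V) (x : V)
    (hx : ∃ q : V → ℝ, (∑ s ∈ S, q s = 1) ∧ ∑ s ∈ S, q s • s = x) :
    (rob S x = 1 ↔ x ∈ convexHull ℝ (S : Set V)) ∧
      (x ∉ convexHull ℝ (S : Set V) → 1 < rob S x) :=
  ⟨rob_eq_one_iff hx,
    fun h => (one_le_rob hx).lt_of_ne fun h1 => h ((rob_eq_one_iff hx).1 h1.symm)⟩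

theorem stmt_2 {V : Type*} [AddCommGroup V] [Module ℝ V] [FiniteDimensional ℝ V]
    (S : Finset V) (x : V)
    (hx : ∃ q : V → ℝ, (∑ s ∈ S, q s = 1) ∧ ∑ s ∈ S, q s • s = x) :
    (rob S x = 1 ↔ x ∈ convexHull ℝ (S : Set V)) ∧
      (x ∉ convexHull ℝ (S : Set V) → 1 < rob S x) :=
  stmt_2_general S x hx
end

section
/- Let S be a finite subset of a real vector space V, and let T : V → V be a linear map satisfying T(S) ⊆ conv(S) (T maps each element of S into the convex hull of S). Then for every x admitting a decomposition, R(T(x)) ≤ R(x), where R is the robustness defined as the minimal ℓ¹-norm over affine decompositions into elements of S. -/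
theorem stmt_4 {V : Type*} [AddCommGroup V] [Module ℝ V]
    (S : Finset V) (T : V →ₗ[ℝ] V)
    (hT : ∀ s ∈ S, T s ∈ convexHull ℝ (S : Set V))
    (x : V)
    (hx : ∃ q : V → ℝ, (∑ s ∈ S, q s = 1) ∧ ∑ s ∈ S, q s • s = x) :
    rob S (T x) ≤ rob S x := by
  apply le_csInf
  · obtain ⟨q, h1, h2⟩ := hx
    exact ⟨∑ s ∈ S, |q s|, q, h1, h2, rfl⟩
  · rintro r ⟨q, hq1, hq2, rfl⟩
    choose p hp0 hp1 hp2 using fun s (hs : s ∈ S) => (Finset.mem_convexHull'.mp (hT s hs))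
    set q' : V → ℝ := fun t => ∑ s ∈ S.attach, q s.1 * p s.1 s.2 t with hq'
    have hbdd : BddBelow {r : ℝ | ∃ w : V → ℝ,
        (∑ s ∈ S, w s = 1) ∧ (∑ s ∈ S, w s • s = T x) ∧ r = ∑ s ∈ S, |w s|} := by
      refine ⟨0, ?_⟩
      rintro r ⟨w, _, _, rfl⟩
      exact Finset.sum_nonneg fun _ _ => abs_nonneg _
    have h1 : ∑ t ∈ S, q' t = 1 := by
      rw [Finset.sum_comm]
      calc ∑ s ∈ S.attach, ∑ t ∈ S, q s.1 * p s.1 s.2 t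
          = ∑ s ∈ S.attach, q s.1 := by
            refine Finset.sum_congr rfl fun s _ => ?_
            rw [← Finset.mul_sum, hp1 s.1 s.2, mul_one]
        _ = 1 := by rw [Finset.sum_attach]; exact hq1
    have h2 : ∑ t ∈ S, q' t • t = T x := by
      have e1 : ∑ t ∈ S, q' t • t
          = ∑ t ∈ S, ∑ s ∈ S.attach, (q s.1 * p s.1 s.2 t) • t := by
        refine Finset.sum_congr rfl fun t _ => ?_
        rw [hq', Finset.sum_smul]
      rw [e1, Finset.sum_comm]
      have e2 : ∀ s ∈ S.attach, ∑ t ∈ S, (q s.1 * p s.1 s.2 t) • t = q s.1 • T s.1 := by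
        intro s _
        rw [← hp2 s.1 s.2, Finset.smul_sum]
        refine Finset.sum_congr rfl fun t _ => ?_
        rw [smul_smul]
      rw [Finset.sum_congr rfl e2, ← hq2, map_sum,
        ← Finset.sum_attach S (fun s => T (q s • s))]
      refine Finset.sum_congr rfl fun s _ => (map_smul T _ _).symm
    have h3 : ∑ t ∈ S, |q' t| ≤ ∑ s ∈ S, |q s| := by
      calc ∑ t ∈ S, |q' t| ≤ ∑ t ∈ S, ∑ s ∈ S.attach, |q s.1| * p s.1 s.2 t := by
            refine Finset.sum_le_sum fun t ht => ?_
            refine (Finset.abs_sum_le_sum_abs _ _).trans_eq ?_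
            refine Finset.sum_congr rfl fun s _ => ?_
            rw [abs_mul, abs_of_nonneg (hp0 s.1 s.2 t ht)]
        _ = ∑ s ∈ S.attach, |q s.1| * ∑ t ∈ S, p s.1 s.2 t := by
            rw [Finset.sum_comm]
            exact Finset.sum_congr rfl fun s _ => (Finset.mul_sum _ _ _).symm
        _ = ∑ s ∈ S, |q s| := by
            rw [← Finset.sum_attach S (fun s => |q s|)]
            refine Finset.sum_congr rfl fun s _ => by rw [hp1 s.1 s.2, mul_one]
    calc rob S (T x) ≤ ∑ t ∈ S, |q' t| := csInf_le hbdd ⟨q', h1, h2, rfl⟩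
      _ ≤ ∑ s ∈ S, |q s| := h3
end

section
/- Let S_A ⊆ V_A and S_B ⊆ V_B be finite subsets of real vector spaces, and suppose S ⊆ V_A ⊗ V_B is a finite set containing {a ⊗ b : a ∈ S_A, b ∈ S_B}. Then the robustness satisfies R_S(x ⊗ y) ≤ R_{S_A}(x) · R_{S_B}(y) for all x ∈ V_A and y ∈ V_B admitting decompositions. -/
open TensorProduct

theorem stmt_5 {VA VB : Type*} [AddCommGroup VA] [Module ℝ VA]
    [AddCommGroup VB] [Module ℝ VB]
    (SA : Finset VA) (SB : Finset VB) (S : Finset (VA ⊗[ℝ] VB))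
    (hS : ∀ a ∈ SA, ∀ b ∈ SB, (a ⊗ₜ[ℝ] b) ∈ S)
    (x : VA) (y : VB)
    (hx : ∃ q : VA → ℝ, (∑ s ∈ SA, q s = 1) ∧ ∑ s ∈ SA, q s • s = x)
    (hy : ∃ q : VB → ℝ, (∑ s ∈ SB, q s = 1) ∧ ∑ s ∈ SB, q s • s = y) :
    rob S (x ⊗ₜ[ℝ] y) ≤ rob SA x * rob SB y := by
  obtain ⟨qa, hqa1, hqax⟩ := hx
  obtain ⟨pb, hpb1, hpby⟩ := hy
  set A := {r : ℝ | ∃ q : VA → ℝ,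
    (∑ s ∈ SA, q s = 1) ∧ (∑ s ∈ SA, q s • s = x) ∧ r = ∑ s ∈ SA, |q s|} with hAdef
  set B := {r : ℝ | ∃ q : VB → ℝ,
    (∑ s ∈ SB, q s = 1) ∧ (∑ s ∈ SB, q s • s = y) ∧ r = ∑ s ∈ SB, |q s|} with hBdef
  have hAne : A.Nonempty := ⟨∑ s ∈ SA, |qa s|, qa, hqa1, hqax, rfl⟩
  have hBne : B.Nonempty := ⟨∑ s ∈ SB, |pb s|, pb, hpb1, hpby, rfl⟩
  have hA1 : ∀ r ∈ A, (1:ℝ) ≤ r := by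
    rintro r ⟨q, hq1, -, rfl⟩
    calc (1:ℝ) = |∑ s ∈ SA, q s| := by rw [hq1]; simp
      _ ≤ ∑ s ∈ SA, |q s| := Finset.abs_sum_le_sum_abs _ _
  have hB1 : ∀ r ∈ B, (1:ℝ) ≤ r := by
    rintro r ⟨q, hq1, -, rfl⟩
    calc (1:ℝ) = |∑ s ∈ SB, q s| := by rw [hq1]; simp
      _ ≤ ∑ s ∈ SB, |q s| := Finset.abs_sum_le_sum_abs _ _
  have hrA : (1:ℝ) ≤ rob SA x := le_csInf hAne hA1
  have hrB : (1:ℝ) ≤ rob SB y := le_csInf hBne hB1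
  have key : ∀ q : VA → ℝ, ∀ p : VB → ℝ,
      (∑ s ∈ SA, q s = 1) → (∑ s ∈ SA, q s • s = x) →
      (∑ s ∈ SB, p s = 1) → (∑ s ∈ SB, p s • s = y) →
      rob S (x ⊗ₜ[ℝ] y) ≤ (∑ s ∈ SA, |q s|) * (∑ s ∈ SB, |p s|) := by
    intro q p hq1 hqx hp1 hpy
    classical
    set Q : VA ⊗[ℝ] VB → ℝ := fun s =>
      ∑ ab ∈ (SA ×ˢ SB).filter (fun ab => ab.1 ⊗ₜ[ℝ] ab.2 = s), q ab.1 * p ab.2 with hQ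
    have hmaps : ∀ ab ∈ SA ×ˢ SB, ab.1 ⊗ₜ[ℝ] ab.2 ∈ S := by
      intro ab hab
      rw [Finset.mem_product] at hab
      exact hS _ hab.1 _ hab.2
    have h1 : ∑ s ∈ S, Q s = 1 := by
      rw [hQ]
      rw [Finset.sum_fiberwise_of_maps_to hmaps]
      rw [Finset.sum_product]
      simp only [← Finset.mul_sum, ← Finset.sum_mul, hq1, hp1, one_mul]
    have h2 : ∑ s ∈ S, Q s • s = x ⊗ₜ[ℝ] y := by
      have hstep : ∀ s ∈ S, Q s • s =
          ∑ ab ∈ (SA ×ˢ SB).filter (fun ab => ab.1 ⊗ₜ[ℝ] ab.2 = s),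
            (q ab.1 * p ab.2) • (ab.1 ⊗ₜ[ℝ] ab.2) := by
        intro s hs
        rw [hQ, Finset.sum_smul]
        refine Finset.sum_congr rfl fun ab hab => ?_
        rw [Finset.mem_filter] at hab
        rw [hab.2]
      rw [Finset.sum_congr rfl hstep,
        Finset.sum_fiberwise_of_maps_to hmaps (fun ab => (q ab.1 * p ab.2) • (ab.1 ⊗ₜ[ℝ] ab.2)),
        Finset.sum_product, ← hqx, ← hpy, TensorProduct.sum_tmul]
      refine Finset.sum_congr rfl fun a _ => ?_
      rw [TensorProduct.tmul_sum]
      refine Finset.sum_congr rfl fun b _ => ?_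
      rw [TensorProduct.smul_tmul_smul]
    have h3 : ∑ s ∈ S, |Q s| ≤ (∑ s ∈ SA, |q s|) * (∑ s ∈ SB, |p s|) := by
      calc ∑ s ∈ S, |Q s|
          ≤ ∑ s ∈ S, ∑ ab ∈ (SA ×ˢ SB).filter (fun ab => ab.1 ⊗ₜ[ℝ] ab.2 = s),
              |q ab.1 * p ab.2| :=
            Finset.sum_le_sum fun s _ => Finset.abs_sum_le_sum_abs _ _
        _ = ∑ ab ∈ SA ×ˢ SB, |q ab.1 * p ab.2| :=
            Finset.sum_fiberwise_of_maps_to hmaps _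
        _ = (∑ s ∈ SA, |q s|) * (∑ s ∈ SB, |p s|) := by
            rw [Finset.sum_product, Finset.sum_mul]
            simp [abs_mul, Finset.mul_sum]
    have hbdd : BddBelow {r : ℝ | ∃ Q' : VA ⊗[ℝ] VB → ℝ,
        (∑ s ∈ S, Q' s = 1) ∧ (∑ s ∈ S, Q' s • s = x ⊗ₜ[ℝ] y) ∧ r = ∑ s ∈ S, |Q' s|} := by
      refine ⟨0, ?_⟩
      rintro r ⟨Q', -, -, rfl⟩
      exact Finset.sum_nonneg fun s _ => abs_nonneg _
    calc rob S (x ⊗ₜ[ℝ] y) ≤ ∑ s ∈ S, |Q s| := csInf_le hbdd ⟨Q, h1, h2, rfl⟩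
      _ ≤ _ := h3
  refine le_of_forall_pos_le_add fun ε hε => ?_
  set δ := min 1 (ε / (rob SA x + rob SB y + 1)) with hδdef
  have hpos : (0:ℝ) < rob SA x + rob SB y + 1 := by linarith
  have hδ : 0 < δ := lt_min one_pos (div_pos hε hpos)
  have heA : rob SA x = sInf A := rfl
  have heB : rob SB y = sInf B := rfl
  obtain ⟨ra, hraA, hralt⟩ := Real.lt_sInf_add_pos hAne hδ
  obtain ⟨rb, hrbB, hrblt⟩ := Real.lt_sInf_add_pos hBne hδ
  obtain ⟨q, hq1, hqx, hraeq⟩ := hraA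
  obtain ⟨p, hp1, hpy, hrbeq⟩ := hrbB
  have hk := key q p hq1 hqx hp1 hpy
  rw [← hraeq, ← hrbeq] at hk
  have hra1 : (1:ℝ) ≤ ra := hA1 ra ⟨q, hq1, hqx, hraeq⟩
  have hrb1 : (1:ℝ) ≤ rb := hB1 rb ⟨p, hp1, hpy, hrbeq⟩
  have hδ1 : δ ≤ 1 := min_le_left _ _
  have hδ2 : δ * (rob SA x + rob SB y + 1) ≤ ε := by
    rw [← le_div_iff₀ hpos]
    exact min_le_right _ _
  rw [← heA] at hralt
  rw [← heB] at hrblt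
  have h5 : ra * rb ≤ (rob SA x + δ) * (rob SB y + δ) :=
    mul_le_mul hralt.le hrblt.le (by linarith) (by linarith)
  nlinarith [h5, hδ2, hδ1, hδ.le]
end

section
/- Maximum-increase property (abstract): let S be a finite subset of a real vector space V, E : V → V linear, and C(E) = sup_{s ∈ S} R(E(s)) the capacity. Then for every ρ ∈ V admitting a decomposition over S, R(E(ρ)) ≤ C(E) · R(ρ). -/
lemma rob_le_aux {V : Type*} [AddCommGroup V] [Module ℝ V] (S : Finset V) (x : V)
    (q : V → ℝ) (h1 : ∑ s ∈ S, q s = 1) (h2 : ∑ s ∈ S, q s • s = x) :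
    rob S x ≤ ∑ s ∈ S, |q s| := by
  apply csInf_le
  · refine ⟨0, ?_⟩
    rintro r ⟨p, hp1, hp2, rfl⟩
    positivity
  · exact ⟨q, h1, h2, rfl⟩

lemma one_le_sum_abs {V : Type*} (S : Finset V) (q : V → ℝ) (h1 : ∑ s ∈ S, q s = 1) :
    (1 : ℝ) ≤ ∑ s ∈ S, |q s| := by
  calc (1:ℝ) = |∑ s ∈ S, q s| := by rw [h1]; simp
  _ ≤ ∑ s ∈ S, |q s| := Finset.abs_sum_le_sum_abs _ _

theorem stmt_16 {V : Type*} [AddCommGroup V] [Module ℝ V]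
    (S : Finset V) (hS : S.Nonempty) (E : V →ₗ[ℝ] V)
    -- the capacity is finite: each `E s` admits a decomposition over `S`
    (hEdec : ∀ s ∈ S, ∃ q : V → ℝ, (∑ t ∈ S, q t = 1) ∧ ∑ t ∈ S, q t • t = E s)
    (ρ : V)
    -- the infimum defining `rob S ρ` is attained
    (hρ : ∃ q : V → ℝ, (∑ s ∈ S, q s = 1) ∧ (∑ s ∈ S, q s • s = ρ) ∧
      (∑ s ∈ S, |q s|) = rob S ρ) :
    rob S (E ρ) ≤ S.sup' hS (fun s => rob S (E s)) * rob S ρ := by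
  obtain ⟨q, hq1, hq2, hq3⟩ := hρ
  set C := S.sup' hS (fun s => rob S (E s)) with hC
  have hρ1 : (1:ℝ) ≤ rob S ρ := hq3 ▸ one_le_sum_abs S q hq1
  have hρpos : (0:ℝ) < rob S ρ := lt_of_lt_of_le one_pos hρ1
  apply le_of_forall_pos_le_add
  intro ε hε
  set δ := ε / rob S ρ with hδdef
  have hδ : 0 < δ := div_pos hε hρpos
  -- choose near-optimal decompositions of E s
  have key : ∀ s : V, ∃ r : V → ℝ, s ∈ S →
      (∑ t ∈ S, r t = 1) ∧ (∑ t ∈ S, r t • t = E s) ∧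
      (∑ t ∈ S, |r t|) < rob S (E s) + δ := by
    intro s
    by_cases hs : s ∈ S
    · obtain ⟨r0, hr01, hr02⟩ := hEdec s hs
      have hne : {r : ℝ | ∃ p : V → ℝ,
          (∑ t ∈ S, p t = 1) ∧ (∑ t ∈ S, p t • t = E s) ∧ r = ∑ t ∈ S, |p t|}.Nonempty :=
        ⟨∑ t ∈ S, |r0 t|, r0, hr01, hr02, rfl⟩
      obtain ⟨a, ⟨p, hp1, hp2, rfl⟩, ha⟩ := Real.lt_sInf_add_pos hne hδ
      exact ⟨p, fun _ => ⟨hp1, hp2, ha⟩⟩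
    · exact ⟨0, fun h => absurd h hs⟩
  choose r hr using key
  set p : V → ℝ := fun t => ∑ s ∈ S, q s * r s t with hp
  have hp1 : ∑ t ∈ S, p t = 1 := by
    rw [Finset.sum_comm]
    rw [show (1:ℝ) = ∑ s ∈ S, q s from hq1.symm]
    refine Finset.sum_congr rfl fun s hs => ?_
    rw [← Finset.mul_sum, (hr s hs).1, mul_one]
  have hp2 : ∑ t ∈ S, p t • t = E ρ := by
    have : ∑ t ∈ S, p t • t = ∑ s ∈ S, q s • (∑ t ∈ S, r s t • t) := by
      simp only [hp, Finset.sum_smul]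
      rw [Finset.sum_comm]
      refine Finset.sum_congr rfl fun s _ => ?_
      rw [Finset.smul_sum]
      refine Finset.sum_congr rfl fun t _ => ?_
      rw [smul_smul]
    rw [this]
    rw [show E ρ = ∑ s ∈ S, q s • E s by rw [← hq2, map_sum]; simp [map_smul]]
    exact Finset.sum_congr rfl fun s hs => by rw [(hr s hs).2.1]
  have hbound : ∑ t ∈ S, |p t| ≤ C * rob S ρ + ε := by
    have h1 : ∑ t ∈ S, |p t| ≤ ∑ s ∈ S, |q s| * ∑ t ∈ S, |r s t| := by
      calc ∑ t ∈ S, |p t| ≤ ∑ t ∈ S, ∑ s ∈ S, |q s * r s t| :=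
            Finset.sum_le_sum fun t _ => Finset.abs_sum_le_sum_abs _ _
      _ = ∑ s ∈ S, |q s| * ∑ t ∈ S, |r s t| := by
            rw [Finset.sum_comm]
            exact Finset.sum_congr rfl fun s _ => by
              rw [Finset.mul_sum]
              exact Finset.sum_congr rfl fun t _ => abs_mul _ _
    have h2 : ∑ s ∈ S, |q s| * ∑ t ∈ S, |r s t| ≤ ∑ s ∈ S, |q s| * (C + δ) := by
      refine Finset.sum_le_sum fun s hs => ?_
      refine mul_le_mul_of_nonneg_left ?_ (abs_nonneg _)
      calc ∑ t ∈ S, |r s t| ≤ rob S (E s) + δ := le_of_lt (hr s hs).2.2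
      _ ≤ C + δ := by
            have := Finset.le_sup' (fun s => rob S (E s)) hs
            linarith
    have h3 : ∑ s ∈ S, |q s| * (C + δ) = rob S ρ * (C + δ) := by
      rw [← Finset.sum_mul, hq3]
    have h4 : rob S ρ * (C + δ) = C * rob S ρ + ε := by
      rw [mul_add, hδdef, mul_div_cancel₀ _ (ne_of_gt hρpos), mul_comm]
    linarith
  calc rob S (E ρ) ≤ ∑ t ∈ S, |p t| := rob_le_aux S (E ρ) p hp1 hp2
  _ ≤ C * rob S ρ + ε := hbound
end
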